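/- arXiv:2503.02513 — 6 statements merged into one kernel-verified Lean document; each statement's English description precedes it below -/
import Mathlib

section
/- After any sequence of forward push operations starting from the standard initialization at node s, the residue values satisfy r_s^(ℓ)(u) ≤ p^(ℓ)(s,u) for all nodes u and all 0 ≤ ℓ ≤ L. -/
open Matrix Finset

/-- The random-walk transition matrix `P = A D⁻¹` of a graph. -/
noncomputable def transP {V : Type*} [Fintype V] [DecidableEq V]
    (G : SimpleGraph V) [DecidableRel G.Adj] : Matrix V V ℝ :=
  G.adjMatrix ℝ * (Matrix.diagonal fun v => (G.degree v : ℝ))⁻¹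

/-- `ℓ`-step transition probability from `s` to `t`: the `(t, s)` entry of `P ^ ℓ`. -/
noncomputable def stepProb {V : Type*} [Fintype V] [DecidableEq V]
    (G : SimpleGraph V) [DecidableRel G.Adj] (ℓ : ℕ) (s t : V) : ℝ :=
  ((transP G) ^ ℓ) t s

/-- The standard initialization of the forward-push state for source `s`:
all reserves `q` are `0`, the residue is `r⁽⁰⁾ = e_s` and `r⁽ℓ⁾ = 0` for `ℓ ≥ 1`.
The first component is the family of reserve vectors `q⁽ℓ⁾`, the second
the family of residue vectors `r⁽ℓ⁾`. -/
noncomputable def pushInit {V : Type*} [DecidableEq V] (s : V) :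
    (ℕ → V → ℝ) × (ℕ → V → ℝ) :=
  (fun _ _ => 0, fun k v => if k = 0 ∧ v = s then 1 else 0)

/-- One forward push operation at node `u` and level `ℓ`:
`q⁽ℓ⁾(u) += r⁽ℓ⁾(u)`; for each neighbor `v` of `u`, `r⁽ℓ⁺¹⁾(v) += r⁽ℓ⁾(u)/d(u)`;
finally `r⁽ℓ⁾(u) := 0`. -/
noncomputable def pushOp {V : Type*} [Fintype V] [DecidableEq V]
    (G : SimpleGraph V) [DecidableRel G.Adj]
    (σ : (ℕ → V → ℝ) × (ℕ → V → ℝ)) (u : V) (ℓ : ℕ) :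
    (ℕ → V → ℝ) × (ℕ → V → ℝ) :=
  (fun k v => if k = ℓ ∧ v = u then σ.1 k v + σ.2 ℓ u else σ.1 k v,
   fun k v =>
     if k = ℓ ∧ v = u then 0
     else if k = ℓ + 1 ∧ G.Adj u v then σ.2 k v + σ.2 ℓ u / (G.degree u : ℝ)
     else σ.2 k v)

/-- The state after performing a given sequence of forward push operations. -/
noncomputable def pushRun {V : Type*} [Fintype V] [DecidableEq V]
    (G : SimpleGraph V) [DecidableRel G.Adj]
    (σ₀ : (ℕ → V → ℝ) × (ℕ → V → ℝ)) (ops : List (V × ℕ)) :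
    (ℕ → V → ℝ) × (ℕ → V → ℝ) :=
  ops.foldl (fun σ op => pushOp G σ op.1 op.2) σ₀

/-!
Push operations preserve, besides the nonnegativity of reserves and residues, the identity
`P ^ ℓ e_s = q⁽ℓ⁾ + ∑_{k ≤ ℓ} P ^ (ℓ - k) r⁽ᵏ⁾` of vectors, where `P = A D⁻¹`: a push at `(u, m)`
removes `x = r⁽ᵐ⁾(u) e_u` from level `m`, adds it to the reserve `q⁽ᵐ⁾` and adds `P x` to level
`m + 1`; at every level `ℓ > m` the two residue changes contribute `∓ P ^ (ℓ - m) x` and cancel.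
All summands being nonnegative, the summand `k = ℓ`, namely `r⁽ℓ⁾`, is at most `P ^ ℓ e_s`.
-/

namespace Matrix

lemma mulVec_nonneg {m n R : Type*} [Fintype n] [Semiring R] [PartialOrder R] [IsOrderedRing R]
    {M : Matrix m n R} (hM : ∀ i j, 0 ≤ M i j) {x : n → R} (hx : 0 ≤ x) : 0 ≤ M *ᵥ x :=
  fun i => Finset.sum_nonneg fun j _ => mul_nonneg (hM i j) (hx j)

lemma sum_range_pow_sub_mulVec_ite {n R : Type*} [Fintype n] [DecidableEq n] [Semiring R]
    (M : Matrix n n R) (ℓ j : ℕ) (x : n → R) :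
    ∑ k ∈ range (ℓ + 1), M ^ (ℓ - k) *ᵥ (if k = j then x else 0)
      = if j ≤ ℓ then M ^ (ℓ - j) *ᵥ x else 0 := by
  calc ∑ k ∈ range (ℓ + 1), M ^ (ℓ - k) *ᵥ (if k = j then x else 0)
      = ∑ k ∈ range (ℓ + 1), if k = j then M ^ (ℓ - k) *ᵥ x else 0 :=
        sum_congr rfl fun k _ => by split_ifs <;> simp
    _ = if j ≤ ℓ then M ^ (ℓ - j) *ᵥ x else 0 := by
        simp [sum_ite_eq']

end Matrix

section

variable {V : Type*} [Fintype V] [DecidableEq V] {G : SimpleGraph V} [DecidableRel G.Adj]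

lemma transP_apply (hdeg : ∀ v, 0 < G.degree v) (t s : V) :
    transP G t s = if G.Adj s t then (G.degree s : ℝ)⁻¹ else 0 := by
  have hunit : IsUnit (fun v => (G.degree v : ℝ)) :=
    Pi.isUnit_iff.mpr fun v => (Nat.cast_pos.mpr (hdeg v)).ne'.isUnit
  simp [transP, Matrix.inv_diagonal, Ring.inverse_of_isUnit hunit, Matrix.mul_diagonal,
    SimpleGraph.adjMatrix_apply, SimpleGraph.adj_comm]

lemma transP_nonneg (hdeg : ∀ v, 0 < G.degree v) (t s : V) : 0 ≤ transP G t s := by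
  rw [transP_apply hdeg]
  split_ifs <;> positivity

lemma stepProb_eq_mulVec (ℓ : ℕ) (s t : V) :
    stepProb G ℓ s t = (transP G ^ ℓ *ᵥ Pi.single s 1) t := by
  simp [stepProb]

variable (G) in
structure PushInvariant (s : V) (σ : (ℕ → V → ℝ) × (ℕ → V → ℝ)) : Prop where
  reserve_nonneg : ∀ k, 0 ≤ σ.1 k
  residue_nonneg : ∀ k, 0 ≤ σ.2 k
  decomposition : ∀ ℓ, transP G ^ ℓ *ᵥ Pi.single s 1
    = σ.1 ℓ + ∑ k ∈ range (ℓ + 1), transP G ^ (ℓ - k) *ᵥ σ.2 k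

lemma pushInit_invariant (s : V) : PushInvariant G s (pushInit s) where
  reserve_nonneg _ := le_rfl
  residue_nonneg k v := by simp only [pushInit]; split_ifs <;> norm_num
  decomposition ℓ := by
    have hres : (pushInit s).2 = fun k => if k = 0 then Pi.single s 1 else 0 := by
      ext k v
      by_cases hk : k = 0 <;> by_cases hv : v = s <;> simp [pushInit, hk, hv]
    simp only [hres, Matrix.sum_range_pow_sub_mulVec_ite, if_pos (Nat.zero_le ℓ), Nat.sub_zero]
    exact (zero_add _).symm

lemma pushOp_fst (σ : (ℕ → V → ℝ) × (ℕ → V → ℝ)) (u : V) (m k : ℕ) :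
    (pushOp G σ u m).1 k = σ.1 k + if k = m then Pi.single u (σ.2 m u) else 0 := by
  ext v
  by_cases hk : k = m <;> by_cases hv : v = u <;> simp [pushOp, hk, hv]

lemma pushOp_snd (hdeg : ∀ v, 0 < G.degree v) (σ : (ℕ → V → ℝ) × (ℕ → V → ℝ)) (u : V)
    (m k : ℕ) :
    (pushOp G σ u m).2 k = σ.2 k + (if k = m + 1 then transP G *ᵥ Pi.single u (σ.2 m u) else 0)
      - if k = m then Pi.single u (σ.2 m u) else 0 := by
  ext v
  by_cases hk : k = m <;> by_cases hk' : k = m + 1 <;> by_cases hv : v = u <;>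
    simp [pushOp, transP_apply hdeg, hk, hk', hv, div_eq_mul_inv, add_ite]

lemma PushInvariant.pushOp (hdeg : ∀ v, 0 < G.degree v) {s : V}
    {σ : (ℕ → V → ℝ) × (ℕ → V → ℝ)} (hσ : PushInvariant G s σ) (u : V) (m : ℕ) :
    PushInvariant G s (pushOp G σ u m) where
  reserve_nonneg k v := by
    simp only [_root_.pushOp]
    split_ifs
    exacts [add_nonneg (hσ.reserve_nonneg k v) (hσ.residue_nonneg m u), hσ.reserve_nonneg k v]
  residue_nonneg k v := by
    have hd : (0 : ℝ) < G.degree u := Nat.cast_pos.mpr (hdeg u)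
    simp only [_root_.pushOp]
    split_ifs
    exacts [le_rfl, add_nonneg (hσ.residue_nonneg k v) (div_nonneg (hσ.residue_nonneg m u) hd.le),
      hσ.residue_nonneg k v]
  decomposition ℓ := by
    have hmoved (x : V → ℝ) :
        (if m + 1 ≤ ℓ then transP G ^ (ℓ - (m + 1)) *ᵥ (transP G *ᵥ x) else 0)
          = if m + 1 ≤ ℓ then transP G ^ (ℓ - m) *ᵥ x else 0 := by
      split_ifs with h
      · rw [mulVec_mulVec, ← pow_succ, Nat.sub_add_eq, Nat.sub_add_cancel (by omega)]
      · rfl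
    have hsum : ∑ k ∈ range (ℓ + 1), transP G ^ (ℓ - k) *ᵥ (_root_.pushOp G σ u m).2 k
        = ∑ k ∈ range (ℓ + 1), transP G ^ (ℓ - k) *ᵥ σ.2 k
          + (if m + 1 ≤ ℓ then transP G ^ (ℓ - m) *ᵥ Pi.single u (σ.2 m u) else 0)
          - if m ≤ ℓ then transP G ^ (ℓ - m) *ᵥ Pi.single u (σ.2 m u) else 0 := by
      simp only [pushOp_snd hdeg, mulVec_add, mulVec_sub, sum_add_distrib, sum_sub_distrib,
        Matrix.sum_range_pow_sub_mulVec_ite, hmoved]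
    rw [hσ.decomposition ℓ, pushOp_fst, hsum]
    rcases lt_trichotomy ℓ m with h | rfl | h
    · simp [h.ne, h.not_ge, (h.trans (Nat.lt_succ_self m)).not_ge]
    · simp only [le_rfl, (Nat.lt_succ_self ℓ).not_ge, if_true, if_false, Nat.sub_self,
        pow_zero, one_mulVec]
      abel
    · simp [h.ne', h.le, Nat.succ_le_of_lt h]

lemma PushInvariant.pushRun (hdeg : ∀ v, 0 < G.degree v) {s : V}
    {σ : (ℕ → V → ℝ) × (ℕ → V → ℝ)} (hσ : PushInvariant G s σ) (ops : List (V × ℕ)) :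
    PushInvariant G s (pushRun G σ ops) := by
  induction ops generalizing σ with
  | nil => exact hσ
  | cons op ops ih => exact ih (hσ.pushOp hdeg op.1 op.2)

lemma PushInvariant.residue_le (hdeg : ∀ v, 0 < G.degree v) {s : V}
    {σ : (ℕ → V → ℝ) × (ℕ → V → ℝ)} (hσ : PushInvariant G s σ) (ℓ : ℕ) :
    σ.2 ℓ ≤ transP G ^ ℓ *ᵥ Pi.single s 1 := by
  have hterm_nonneg (k : ℕ) : 0 ≤ transP G ^ (ℓ - k) *ᵥ σ.2 k :=
    Matrix.mulVec_nonneg (Matrix.pow_apply_nonneg (transP_nonneg hdeg) _) (hσ.residue_nonneg k)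
  calc σ.2 ℓ = transP G ^ (ℓ - ℓ) *ᵥ σ.2 ℓ := by simp
    _ ≤ ∑ k ∈ range (ℓ + 1), transP G ^ (ℓ - k) *ᵥ σ.2 k :=
      single_le_sum (fun k _ => hterm_nonneg k) (self_mem_range_succ ℓ)
    _ ≤ σ.1 ℓ + ∑ k ∈ range (ℓ + 1), transP G ^ (ℓ - k) *ᵥ σ.2 k :=
      le_add_of_nonneg_left (hσ.reserve_nonneg ℓ)
    _ = transP G ^ ℓ *ᵥ Pi.single s 1 := (hσ.decomposition ℓ).symm

end

/-- Residue upper bound: after any sequence of forward push operations from the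
standard initialization at `s`, `r_s⁽ℓ⁾(u) ≤ p⁽ℓ⁾(s,u)` for all `u` and `ℓ ≤ L`. -/
theorem residue_le_stepProb {V : Type*} [Fintype V] [DecidableEq V]
    (G : SimpleGraph V) [DecidableRel G.Adj]
    (hdeg : ∀ v : V, 0 < G.degree v) (s : V) (L : ℕ) (ops : List (V × ℕ)) :
    ∀ ℓ ≤ L, ∀ u : V,
      (pushRun G (pushInit s) ops).2 ℓ u ≤ stepProb G ℓ s u := by
  intro ℓ _ u
  rw [stepProb_eq_mulVec]
  exact (pushInit_invariant s).pushRun hdeg ops |>.residue_le hdeg ℓ u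
end

section
/- Let G be a connected non-bipartite undirected graph with transition matrix P and let λ = max{λ_2, |λ_n|} < 1 where λ_i are the eigenvalues of P in decreasing order. Then for any nodes s, t and any integer L ≥ ⌈log_{1/λ}( 2(1/d(s)+1/d(t)) / (ε(1−λ)) )⌉, the L-truncated effective resistance satisfies |R(s,t) − R_L(s,t)| ≤ ε/2. -/
/-!
Let `N = D^{-1/2} A D^{-1/2}`. It is symmetric and similar to `P = A D⁻¹`, so it has the same
spectrum; moreover `D⁻¹ P^ℓ = D^{-1/2} N^ℓ D^{-1/2}` and `D - A = D^{1/2} (1 - N) D^{1/2}`. With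
`y = D^{-1/2} (e_s - e_t)`, the `ℓ`-th summand of `R_L(s,t)` is `yᵀ N^ℓ y`, and `R(s,t) = wᵀ y` for
any `w` with `(1 - N) w = y`. Such a `w` exists because, by connectivity, the fixed vectors of `N`
are the multiples of `D^{1/2} 𝟙`, which are orthogonal to `y`.

Expanding in an orthonormal eigenbasis `(uᵢ, μᵢ)` of `N` and putting `aᵢ = ⟪uᵢ, w⟫`, one gets
`⟪uᵢ, y⟫ = (1 - μᵢ) aᵢ`, so `R - R_L = ∑ᵢ aᵢ² (1 - μᵢ) μᵢ^(L+1)` and `‖y‖² = ∑ᵢ aᵢ² (1 - μᵢ)²`.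
The eigenvalue `1` contributes nothing, and every other eigenvalue has `|μᵢ| ≤ λ`, so
`|R - R_L| ≤ λ^(L+1) / (1 - λ) · (1/d(s) + 1/d(t))`. The choice of `L` makes this at most `ε/2`.
-/

open Matrix Finset

lemma abs_one_sub_mul_pow_le {μ lam : ℝ} (hlam : lam < 1) (hμ : μ = 1 ∨ |μ| ≤ lam)
    (k : ℕ) : |(1 - μ) * μ ^ k| ≤ lam ^ k / (1 - lam) * (1 - μ) ^ 2 := by
  rcases hμ with rfl | hμ
  · simp
  have hμ_le : μ ≤ lam := (le_abs_self μ).trans hμ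
  have hlam_nonneg : 0 ≤ lam := (abs_nonneg μ).trans hμ
  have hgap : 0 < 1 - lam := sub_pos.mpr hlam
  calc |(1 - μ) * μ ^ k| = (1 - μ) * |μ| ^ k := by
        rw [abs_mul, abs_pow, abs_of_nonneg (by linarith)]
    _ ≤ (1 - μ) * lam ^ k := by gcongr; linarith
    _ = lam ^ k / (1 - lam) * ((1 - μ) * (1 - lam)) := by field_simp
    _ ≤ lam ^ k / (1 - lam) * (1 - μ) ^ 2 := by rw [sq]; gcongr; linarith

namespace Matrix

variable {n : Type*} [Fintype n]

lemma IsSymm.mulVec_dotProduct {R : Type*} [CommSemiring R] {A : Matrix n n R} (hA : A.IsSymm)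
    (x y : n → R) : (A *ᵥ x) ⬝ᵥ y = x ⬝ᵥ A *ᵥ y := by
  rw [dotProduct_mulVec, ← mulVec_transpose, hA.eq]

lemma single_sub_single_dotProduct_mulVec {R : Type*} [CommRing R] [DecidableEq n]
    (M : Matrix n n R) (s t : n) :
    (Pi.single s 1 - Pi.single t 1) ⬝ᵥ M *ᵥ (Pi.single s 1 - Pi.single t 1)
      = M s s - M s t - M t s + M t t := by
  simp only [mulVec_sub, mulVec_single_one, sub_dotProduct, single_one_dotProduct, Pi.sub_apply,
    col_apply]
  ring

lemma dotProduct_mulVec_of_mul_mul_self {R : Type*} [CommSemiring R] {A A' : Matrix n n R}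
    (hA : A.IsSymm) (hA' : A * A' * A = A) (z : n → R) :
    (A *ᵥ z) ⬝ᵥ A' *ᵥ (A *ᵥ z) = z ⬝ᵥ A *ᵥ z := by
  rw [hA.mulVec_dotProduct, mulVec_mulVec, mulVec_mulVec, hA']

namespace IsHermitian

variable [DecidableEq n] {N : Matrix n n ℝ} (hN : N.IsHermitian)
include hN

lemma dotProduct_eq_sum_eigenvectorBasis (v w : n → ℝ) :
    v ⬝ᵥ w = ∑ i, (⇑(hN.eigenvectorBasis i) ⬝ᵥ v) * (⇑(hN.eigenvectorBasis i) ⬝ᵥ w) := by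
  have := hN.eigenvectorBasis.sum_inner_mul_inner (WithLp.toLp 2 v) (WithLp.toLp 2 w)
  simp only [EuclideanSpace.inner_eq_star_dotProduct, star_trivial] at this
  simpa [dotProduct_comm] using this.symm

lemma sum_dotProduct_smul_eigenvectorBasis (v : n → ℝ) :
    ∑ i, (⇑(hN.eigenvectorBasis i) ⬝ᵥ v) • ⇑(hN.eigenvectorBasis i) = v := by
  ext j
  rw [← single_one_dotProduct j v, hN.dotProduct_eq_sum_eigenvectorBasis, Finset.sum_apply]
  simp [mul_comm]

lemma eigenvectorBasis_dotProduct_mulVec (i : n) (v : n → ℝ) :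
    ⇑(hN.eigenvectorBasis i) ⬝ᵥ N *ᵥ v = hN.eigenvalues i * (⇑(hN.eigenvectorBasis i) ⬝ᵥ v) := by
  rw [← (isHermitian_iff_isSymm.mp hN).mulVec_dotProduct, mulVec_eigenvectorBasis, smul_dotProduct,
    smul_eq_mul]

lemma eigenvectorBasis_dotProduct_pow_mulVec (i : n) (v : n → ℝ) (ℓ : ℕ) :
    ⇑(hN.eigenvectorBasis i) ⬝ᵥ (N ^ ℓ) *ᵥ v
      = hN.eigenvalues i ^ ℓ * (⇑(hN.eigenvectorBasis i) ⬝ᵥ v) := by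
  induction ℓ with
  | zero => simp
  | succ ℓ ih =>
    rw [pow_succ', ← mulVec_mulVec, hN.eigenvectorBasis_dotProduct_mulVec, ih, pow_succ']
    ring

lemma dotProduct_pow_mulVec_self (v : n → ℝ) (ℓ : ℕ) :
    v ⬝ᵥ (N ^ ℓ) *ᵥ v = ∑ i, (⇑(hN.eigenvectorBasis i) ⬝ᵥ v) ^ 2 * hN.eigenvalues i ^ ℓ := by
  simp only [hN.dotProduct_eq_sum_eigenvectorBasis v, eigenvectorBasis_dotProduct_pow_mulVec]
  exact Finset.sum_congr rfl fun i _ => by ring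

lemma exists_one_sub_mulVec_eq {y : n → ℝ} (hy : ∀ u, N *ᵥ u = u → u ⬝ᵥ y = 0) :
    ∃ w, (1 - N) *ᵥ w = y := by
  refine ⟨∑ i, ((1 - hN.eigenvalues i)⁻¹ * (⇑(hN.eigenvectorBasis i) ⬝ᵥ y)) •
    ⇑(hN.eigenvectorBasis i), ?_⟩
  conv_rhs => rw [← hN.sum_dotProduct_smul_eigenvectorBasis y]
  rw [mulVec_sum]
  refine Finset.sum_congr rfl fun i _ => ?_
  rw [mulVec_smul, sub_mulVec, one_mulVec, mulVec_eigenvectorBasis, smul_sub, smul_smul,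
    ← sub_smul]
  congr 1
  by_cases hμ : hN.eigenvalues i = 1
  · have hfixed := hN.mulVec_eigenvectorBasis i
    rw [hμ, one_smul] at hfixed
    simp [hμ, hy _ hfixed]
  · field_simp [sub_ne_zero.mpr (Ne.symm hμ)]

theorem abs_dotProduct_sub_sum_pow_le {w y : n → ℝ} (hwy : (1 - N) *ᵥ w = y) {lam : ℝ}
    (hlam : lam < 1) (hspec : ∀ i, hN.eigenvalues i = 1 ∨ |hN.eigenvalues i| ≤ lam) (L : ℕ) :
    |w ⬝ᵥ y - ∑ ℓ ∈ range (L + 1), y ⬝ᵥ (N ^ ℓ) *ᵥ y|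
      ≤ lam ^ (L + 1) / (1 - lam) * (y ⬝ᵥ y) := by
  have hcoeff : ∀ i, ⇑(hN.eigenvectorBasis i) ⬝ᵥ y
      = (1 - hN.eigenvalues i) * (⇑(hN.eigenvectorBasis i) ⬝ᵥ w) := fun i => by
    rw [← hwy, sub_mulVec, one_mulVec, dotProduct_sub, hN.eigenvectorBasis_dotProduct_mulVec]
    ring
  have herror : w ⬝ᵥ y - ∑ ℓ ∈ range (L + 1), y ⬝ᵥ (N ^ ℓ) *ᵥ y
      = ∑ i, (⇑(hN.eigenvectorBasis i) ⬝ᵥ w) ^ 2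
          * ((1 - hN.eigenvalues i) * hN.eigenvalues i ^ (L + 1)) := by
    simp only [hN.dotProduct_eq_sum_eigenvectorBasis w y, hN.dotProduct_pow_mulVec_self, hcoeff]
    rw [Finset.sum_comm, ← Finset.sum_sub_distrib]
    refine Finset.sum_congr rfl fun i _ => ?_
    rw [← Finset.mul_sum]
    linear_combination -(⇑(hN.eigenvectorBasis i) ⬝ᵥ w) ^ 2 * (1 - hN.eigenvalues i) *
      mul_neg_geom_sum (hN.eigenvalues i) (L + 1)
  have hnorm : y ⬝ᵥ y
      = ∑ i, (⇑(hN.eigenvectorBasis i) ⬝ᵥ w) ^ 2 * (1 - hN.eigenvalues i) ^ 2 := by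
    simp only [hN.dotProduct_eq_sum_eigenvectorBasis y y, hcoeff]
    exact Finset.sum_congr rfl fun i _ => by ring
  rw [herror, hnorm, Finset.mul_sum]
  refine (Finset.abs_sum_le_sum_abs _ _).trans (Finset.sum_le_sum fun i _ => ?_)
  rw [abs_mul, abs_of_nonneg (sq_nonneg _), mul_left_comm]
  gcongr
  exact abs_one_sub_mul_pow_le hlam (hspec i) _

end IsHermitian

end Matrix

namespace SimpleGraph

variable {V : Type*} [Fintype V] [DecidableEq V] (G : SimpleGraph V) [DecidableRel G.Adj]

noncomputable def invSqrtDegMatrix : Matrix V V ℝ := diagonal fun v => (√(G.degree v))⁻¹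

noncomputable def normAdjMatrix : Matrix V V ℝ :=
  G.invSqrtDegMatrix * G.adjMatrix ℝ * G.invSqrtDegMatrix

lemma isSymm_invSqrtDegMatrix : G.invSqrtDegMatrix.IsSymm := isSymm_diagonal _

lemma isHermitian_normAdjMatrix : G.normAdjMatrix.IsHermitian := by
  rw [isHermitian_iff_isSymm, normAdjMatrix, IsSymm, transpose_mul, transpose_mul,
    G.isSymm_invSqrtDegMatrix.eq, transpose_adjMatrix, Matrix.mul_assoc]

lemma invSqrtDegMatrix_mul_self :
    G.invSqrtDegMatrix * G.invSqrtDegMatrix = diagonal fun v => (G.degree v : ℝ)⁻¹ := by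
  rw [invSqrtDegMatrix, diagonal_mul_diagonal]
  congr 1
  ext v
  rw [← mul_inv, Real.mul_self_sqrt (Nat.cast_nonneg _)]

variable {G}

lemma invSqrtDegMatrix_mulVec_dotProduct_self {s t : V} (hst : s ≠ t) :
    G.invSqrtDegMatrix *ᵥ (Pi.single s 1 - Pi.single t 1) ⬝ᵥ
        G.invSqrtDegMatrix *ᵥ (Pi.single s 1 - Pi.single t 1)
      = 1 / G.degree s + 1 / G.degree t := by
  rw [G.isSymm_invSqrtDegMatrix.mulVec_dotProduct, mulVec_mulVec, invSqrtDegMatrix_mul_self,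
    single_sub_single_dotProduct_mulVec]
  simp [hst, hst.symm]

noncomputable def sqrtDegUnit (hdeg : ∀ v, 0 < G.degree v) : (Matrix V V ℝ)ˣ where
  val := diagonal fun v => √(G.degree v)
  inv := G.invSqrtDegMatrix
  val_inv := by
    rw [invSqrtDegMatrix, diagonal_mul_diagonal, ← diagonal_one]
    congr 1
    ext v
    exact mul_inv_cancel₀ (Real.sqrt_pos.mpr (Nat.cast_pos.mpr (hdeg v))).ne'
  inv_val := by
    rw [invSqrtDegMatrix, diagonal_mul_diagonal, ← diagonal_one]
    congr 1
    ext v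
    exact inv_mul_cancel₀ (Real.sqrt_pos.mpr (Nat.cast_pos.mpr (hdeg v))).ne'

variable (hdeg : ∀ v, 0 < G.degree v)
include hdeg

lemma sqrtDegUnit_inv : (↑(sqrtDegUnit hdeg)⁻¹ : Matrix V V ℝ) = G.invSqrtDegMatrix := rfl

lemma sqrtDegUnit_mul_self :
    (sqrtDegUnit hdeg : Matrix V V ℝ) * sqrtDegUnit hdeg = G.degMatrix ℝ := by
  rw [sqrtDegUnit, Units.val_mk, diagonal_mul_diagonal, degMatrix]
  congr 1
  ext v
  exact Real.mul_self_sqrt (Nat.cast_nonneg _)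

lemma transP_eq_conj_normAdjMatrix :
    transP G = sqrtDegUnit hdeg * G.normAdjMatrix * G.invSqrtDegMatrix := by
  have hinv : (diagonal fun v => (G.degree v : ℝ))⁻¹
      = G.invSqrtDegMatrix * G.invSqrtDegMatrix := by
    refine inv_eq_left_inv ?_
    rw [invSqrtDegMatrix_mul_self, diagonal_mul_diagonal, ← diagonal_one]
    congr 1
    ext v
    exact inv_mul_cancel₀ (Nat.cast_pos.mpr (hdeg v)).ne'
  rw [transP, hinv, normAdjMatrix, ← sqrtDegUnit_inv hdeg]
  simp only [Matrix.mul_assoc, Units.mul_inv_cancel_left]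

lemma transP_pow_eq_conj (ℓ : ℕ) :
    transP G ^ ℓ = sqrtDegUnit hdeg * G.normAdjMatrix ^ ℓ * G.invSqrtDegMatrix := by
  rw [transP_eq_conj_normAdjMatrix hdeg]
  exact Units.conj_pow (sqrtDegUnit hdeg) _ ℓ

lemma spectrum_normAdjMatrix : spectrum ℝ G.normAdjMatrix = spectrum ℝ (transP G) := by
  rw [transP_eq_conj_normAdjMatrix hdeg, ← sqrtDegUnit_inv hdeg, spectrum.units_conjugate]

lemma lapMatrix_mulVec_invSqrtDegMatrix_mulVec (v : V → ℝ) :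
    G.lapMatrix ℝ *ᵥ (G.invSqrtDegMatrix *ᵥ v)
      = (sqrtDegUnit hdeg : Matrix V V ℝ) *ᵥ ((1 - G.normAdjMatrix) *ᵥ v) := by
  have hlap : G.lapMatrix ℝ * G.invSqrtDegMatrix
      = (sqrtDegUnit hdeg : Matrix V V ℝ) * (1 - G.normAdjMatrix) := by
    rw [lapMatrix, ← sqrtDegUnit_mul_self hdeg, normAdjMatrix, ← sqrtDegUnit_inv hdeg]
    simp only [Matrix.sub_mul, Matrix.mul_sub, Matrix.mul_assoc, Units.mul_inv,
      Units.mul_inv_cancel_left, Matrix.mul_one]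
  rw [mulVec_mulVec, hlap, ← mulVec_mulVec]

lemma dotProduct_normAdjMatrix_pow_mulVec (ℓ : ℕ) (s t : V) :
    G.invSqrtDegMatrix *ᵥ (Pi.single s 1 - Pi.single t 1) ⬝ᵥ
        G.normAdjMatrix ^ ℓ *ᵥ (G.invSqrtDegMatrix *ᵥ (Pi.single s 1 - Pi.single t 1))
      = stepProb G ℓ s s / G.degree s - stepProb G ℓ s t / G.degree t
          - stepProb G ℓ t s / G.degree s + stepProb G ℓ t t / G.degree t := by
  have hconj : G.invSqrtDegMatrix * G.normAdjMatrix ^ ℓ * G.invSqrtDegMatrix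
      = diagonal (fun v => (G.degree v : ℝ)⁻¹) * transP G ^ ℓ := by
    rw [transP_pow_eq_conj hdeg, ← invSqrtDegMatrix_mul_self, ← sqrtDegUnit_inv hdeg]
    simp only [Matrix.mul_assoc, Units.inv_mul_cancel_left]
  rw [G.isSymm_invSqrtDegMatrix.mulVec_dotProduct, mulVec_mulVec, mulVec_mulVec, hconj,
    single_sub_single_dotProduct_mulVec]
  simp only [diagonal_mul, stepProb]
  ring

lemma dotProduct_ginv_lapMatrix_mulVec {Lplus : Matrix V V ℝ}
    (hLplus : G.lapMatrix ℝ * Lplus * G.lapMatrix ℝ = G.lapMatrix ℝ) {x w : V → ℝ}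
    (hw : (1 - G.normAdjMatrix) *ᵥ w = G.invSqrtDegMatrix *ᵥ x) :
    x ⬝ᵥ Lplus *ᵥ x = w ⬝ᵥ G.invSqrtDegMatrix *ᵥ x := by
  have hx : G.lapMatrix ℝ *ᵥ (G.invSqrtDegMatrix *ᵥ w) = x := by
    rw [lapMatrix_mulVec_invSqrtDegMatrix_mulVec hdeg, hw, mulVec_mulVec, ← sqrtDegUnit_inv hdeg,
      Units.mul_inv, one_mulVec]
  rw [← hx, dotProduct_mulVec_of_mul_mul_self (G.isSymm_lapMatrix ℝ) hLplus, hx,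
    G.isSymm_invSqrtDegMatrix.mulVec_dotProduct]

lemma dotProduct_invSqrtDegMatrix_mulVec_eq_zero (hconn : G.Connected) {u : V → ℝ}
    (hu : G.normAdjMatrix *ᵥ u = u) (s t : V) :
    u ⬝ᵥ G.invSqrtDegMatrix *ᵥ (Pi.single s 1 - Pi.single t 1) = 0 := by
  have hker : G.lapMatrix ℝ *ᵥ (G.invSqrtDegMatrix *ᵥ u) = 0 := by
    rw [lapMatrix_mulVec_invSqrtDegMatrix_mulVec hdeg, sub_mulVec, one_mulVec, hu, sub_self,
      mulVec_zero]
  rw [← G.isSymm_invSqrtDegMatrix.mulVec_dotProduct, dotProduct_sub, dotProduct_single_one,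
    dotProduct_single_one, (lapMatrix_mulVec_eq_zero_iff_forall_reachable G).mp hker s t
      (hconn.preconnected s t), sub_self]

end SimpleGraph

lemma pow_div_one_sub_mul_le_of_ceil_logb_le {lam S ε : ℝ} (hlam0 : 0 < lam) (hlam1 : lam < 1)
    (hS : 0 < S) (hε : 0 < ε) {L : ℕ}
    (hL : ⌈Real.logb (1 / lam) (2 * S / (ε * (1 - lam)))⌉ ≤ (L : ℤ)) :
    lam ^ L / (1 - lam) * S ≤ ε / 2 := by
  have hgap : 0 < 1 - lam := sub_pos.mpr hlam1
  have hlog : Real.logb (1 / lam) (2 * S / (ε * (1 - lam))) ≤ L :=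
    Int.ceil_le.mp (by exact_mod_cast hL)
  rw [Real.logb_le_iff_le_rpow (one_lt_one_div hlam0 hlam1) (by positivity), Real.rpow_natCast,
    _root_.one_div_pow, div_le_div_iff₀ (by positivity) (by positivity)] at hlog
  rw [div_mul_eq_mul_div, div_le_div_iff₀ hgap two_pos]
  linarith

theorem truncated_er_error_bound_general {V : Type*} [Fintype V] [DecidableEq V]
    (G : SimpleGraph V) [DecidableRel G.Adj]
    (hconn : G.Connected)
    (lam : ℝ) (hlam0 : 0 < lam) (hlam1 : lam < 1)
    (hspec : ∀ μ ∈ spectrum ℝ (transP G), μ = 1 ∨ |μ| ≤ lam)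
    (Lplus : Matrix V V ℝ)
    (h1 : G.lapMatrix ℝ * Lplus * G.lapMatrix ℝ = G.lapMatrix ℝ)
    (s t : V) (ε : ℝ) (hε : 0 < ε) (L : ℕ)
    (hL : (⌈Real.logb (1 / lam)
        (2 * (1 / (G.degree s : ℝ) + 1 / (G.degree t : ℝ)) / (ε * (1 - lam)))⌉ : ℤ)
        ≤ (L : ℤ)) :
    |(Pi.single s 1 - Pi.single t 1) ⬝ᵥ Lplus *ᵥ (Pi.single s 1 - Pi.single t 1)
        - ∑ ℓ ∈ Finset.range (L + 1),
            (stepProb G ℓ s s / (G.degree s : ℝ) - stepProb G ℓ s t / (G.degree t : ℝ)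
              - stepProb G ℓ t s / (G.degree s : ℝ) + stepProb G ℓ t t / (G.degree t : ℝ))|
      ≤ ε / 2 := by
  rcases eq_or_ne s t with rfl | hst
  · simp only [sub_self, mulVec_zero, dotProduct_zero, zero_sub, neg_add_cancel, sum_const_zero,
      abs_zero]
    positivity
  have : Nontrivial V := nontrivial_of_ne s t hst
  have hdeg : ∀ v, 0 < G.degree v := fun v => hconn.preconnected.degree_pos_of_nontrivial v
  have hN := G.isHermitian_normAdjMatrix
  obtain ⟨w, hw⟩ := hN.exists_one_sub_mulVec_eq fun u hu =>
    SimpleGraph.dotProduct_invSqrtDegMatrix_mulVec_eq_zero hdeg hconn hu s t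
  have hspecN : ∀ i, hN.eigenvalues i = 1 ∨ |hN.eigenvalues i| ≤ lam := fun i =>
    hspec _ (SimpleGraph.spectrum_normAdjMatrix hdeg ▸ hN.eigenvalues_mem_spectrum_real i)
  simp only [← SimpleGraph.dotProduct_normAdjMatrix_pow_mulVec hdeg,
    SimpleGraph.dotProduct_ginv_lapMatrix_mulVec hdeg h1 hw]
  calc _ ≤ lam ^ (L + 1) / (1 - lam) * (1 / G.degree s + 1 / G.degree t) := by
        rw [← SimpleGraph.invSqrtDegMatrix_mulVec_dotProduct_self hst]
        exact hN.abs_dotProduct_sub_sum_pow_le hw hlam1 hspecN L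
    _ ≤ ε / 2 := pow_div_one_sub_mul_le_of_ceil_logb_le hlam0 hlam1
        (add_pos (one_div_pos.mpr (Nat.cast_pos.mpr (hdeg s)))
          (one_div_pos.mpr (Nat.cast_pos.mpr (hdeg t)))) hε
        (hL.trans (by norm_num))

/-- Truncation bound: for a connected non-bipartite graph with all non-top
eigenvalues of `P` bounded in modulus by `λ < 1`, if
`L ≥ ⌈log_{1/λ}( 2(1/d(s)+1/d(t)) / (ε(1−λ)) )⌉` then the `L`-truncated
effective resistance satisfies `|R(s,t) − R_L(s,t)| ≤ ε/2`, where
`R(s,t) = (e_s − e_t)ᵀ L⁺ (e_s − e_t)` with `L⁺` the Moore–Penrose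
pseudoinverse of the Laplacian (characterized by the Penrose conditions). -/
theorem truncated_er_error_bound {V : Type*} [Fintype V] [DecidableEq V]
    (G : SimpleGraph V) [DecidableRel G.Adj]
    (hconn : G.Connected) (hnb : ¬ G.Colorable 2)
    (lam : ℝ) (hlam0 : 0 < lam) (hlam1 : lam < 1)
    (hspec : ∀ μ ∈ spectrum ℝ (transP G), μ = 1 ∨ |μ| ≤ lam)
    (Lplus : Matrix V V ℝ)
    (h1 : G.lapMatrix ℝ * Lplus * G.lapMatrix ℝ = G.lapMatrix ℝ)
    (h2 : Lplus * G.lapMatrix ℝ * Lplus = Lplus)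
    (h3 : (G.lapMatrix ℝ * Lplus)ᵀ = G.lapMatrix ℝ * Lplus)
    (h4 : (Lplus * G.lapMatrix ℝ)ᵀ = Lplus * G.lapMatrix ℝ)
    (s t : V) (ε : ℝ) (hε : 0 < ε) (L : ℕ)
    (hL : (⌈Real.logb (1 / lam)
        (2 * (1 / (G.degree s : ℝ) + 1 / (G.degree t : ℝ)) / (ε * (1 - lam)))⌉ : ℤ)
        ≤ (L : ℤ)) :
    |(Pi.single s 1 - Pi.single t 1) ⬝ᵥ Lplus *ᵥ (Pi.single s 1 - Pi.single t 1)
        - ∑ ℓ ∈ Finset.range (L + 1),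
            (stepProb G ℓ s s / (G.degree s : ℝ) - stepProb G ℓ s t / (G.degree t : ℝ)
              - stepProb G ℓ t s / (G.degree s : ℝ) + stepProb G ℓ t t / (G.degree t : ℝ))|
      ≤ ε / 2 :=
  truncated_er_error_bound_general G hconn lam hlam0 hlam1 hspec Lplus h1 s t ε hε L hL
end

section
/- Each term of the probabilistic expansion of effective resistance summed over two consecutive steps is nonnegative: for any nodes s, t and any even ℓ ≥ 0, (e_s−e_t)^T D^{-1}P^ℓ(e_s−e_t) + (e_s−e_t)^T D^{-1}P^{ℓ+1}(e_s−e_t) ≥ 0. -/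
/-!
Write `W = D⁻¹`, so that `P = A W`. Since `W (A W)ᵏ = (W A)ᵏ W`, the matrix `B = W Pᵏ` is
symmetric, and `W D W = W` turns `W P²ᵏ + W P²ᵏ⁺¹` into `Bᵀ (D + A) B`. The signless Laplacian
`D + A` is positive semidefinite because `xᵀ (D + A) x = ½ ∑_{i ∼ j} (xᵢ + xⱼ)²`.
-/

open Matrix Finset

theorem mul_pow_two_mul_add_mul_pow_succ_eq_star_mul {R : Type*} [Semiring R] [StarRing R]
    {w a d : R} (hw : IsSelfAdjoint w) (ha : IsSelfAdjoint a) (hwdw : w * d * w = w) (k : ℕ) :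
    w * (a * w) ^ (2 * k) + w * (a * w) ^ (2 * k + 1)
      = star (w * (a * w) ^ k) * (d + a) * (w * (a * w) ^ k) := by
  have hsemi : w * (a * w) ^ k = (w * a) ^ k * w :=
    (SemiconjBy.pow_right (mul_assoc w a w).symm k).eq
  have hstar : star (w * (a * w) ^ k) = (w * a) ^ k * w := by
    rw [star_mul, star_pow, star_mul, hw.star_eq, ha.star_eq, ← hsemi]
  rw [hstar, mul_add, add_mul]
  congr 1
  · calc w * (a * w) ^ (2 * k) = (w * a) ^ k * (w * d * w) * (a * w) ^ k := by
          rw [hwdw, ← hsemi, mul_assoc, ← pow_add, two_mul]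
      _ = (w * a) ^ k * w * d * (w * (a * w) ^ k) := by simp only [mul_assoc]
  · calc w * (a * w) ^ (2 * k + 1) = w * (a * w) ^ k * a * (w * (a * w) ^ k) := by
          rw [mul_assoc _ a, ← mul_assoc a, ← pow_succ', mul_assoc, ← pow_add, two_mul,
            add_assoc]
      _ = (w * a) ^ k * w * a * (w * (a * w) ^ k) := by rw [hsemi]

theorem Matrix.nonsing_inv_mul_mul_nonsing_inv {n α : Type*} [Fintype n] [DecidableEq n]
    [CommRing α] (A : Matrix n n α) : A⁻¹ * A * A⁻¹ = A⁻¹ := by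
  rcases A.nonsing_inv_cancel_or_zero with ⟨h, -⟩ | h <;> simp [h]

namespace SimpleGraph

variable {V : Type*} [Fintype V] [DecidableEq V] (G : SimpleGraph V) [DecidableRel G.Adj]

theorem dotProduct_mulVec_degMatrix_add_adjMatrix {R : Type*} [Field R] [CharZero R]
    (x : V → R) :
    x ⬝ᵥ ((G.degMatrix R + G.adjMatrix R) *ᵥ x) =
      (∑ i : V, ∑ j : V, if G.Adj i j then (x i + x j) ^ 2 else 0) / 2 := by
  simp_rw [add_mulVec, dotProduct_add, dotProduct_mulVec_degMatrix,
    dotProduct_mulVec_adjMatrix, ← sum_add_distrib, degree_eq_sum_if_adj, sum_mul, ite_mul,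
    one_mul, zero_mul, ← sum_add_distrib, ite_add_ite, add_zero]
  rw [← add_self_div_two (∑ i : V, ∑ j : V, _)]
  conv_lhs => enter [1, 2, 2, i, 2, j]; rw [if_congr (adj_comm G i j) rfl rfl]
  conv_lhs => enter [1, 2]; rw [Finset.sum_comm]
  simp_rw [← sum_add_distrib, ite_add_ite]
  congr 2 with i
  congr 2 with j
  ring_nf

theorem posSemidef_degMatrix_add_adjMatrix {R : Type*} [Field R] [LinearOrder R]
    [IsStrictOrderedRing R] [StarRing R] [TrivialStar R] :
    (G.degMatrix R + G.adjMatrix R).PosSemidef := by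
  refine .of_dotProduct_mulVec_nonneg
    ((G.isHermitian_degMatrix R).add (G.isHermitian_adjMatrix R)) fun x ↦ ?_
  rw [star_trivial, dotProduct_mulVec_degMatrix_add_adjMatrix]
  positivity

theorem posSemidef_inv_degMatrix_mul_transP_pow_add {ℓ : ℕ} (hℓ : Even ℓ) :
    ((G.degMatrix ℝ)⁻¹ * transP G ^ ℓ + (G.degMatrix ℝ)⁻¹ * transP G ^ (ℓ + 1)).PosSemidef := by
  obtain ⟨k, rfl⟩ := hℓ.two_dvd
  rw [show transP G = G.adjMatrix ℝ * (G.degMatrix ℝ)⁻¹ from rfl,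
    mul_pow_two_mul_add_mul_pow_succ_eq_star_mul (w := (G.degMatrix ℝ)⁻¹)
      (G.isHermitian_degMatrix ℝ).inv (G.isHermitian_adjMatrix ℝ)
      (nonsing_inv_mul_mul_nonsing_inv _)]
  exact G.posSemidef_degMatrix_add_adjMatrix.conjTranspose_mul_mul_same _

end SimpleGraph

theorem consecutive_terms_nonneg_general {V : Type*} [Fintype V] [DecidableEq V]
    (G : SimpleGraph V) [DecidableRel G.Adj]
    (s t : V) (ℓ : ℕ) (hℓ : Even ℓ) :
    0 ≤ (Pi.single s 1 - Pi.single t 1) ⬝ᵥ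
          ((Matrix.diagonal fun v => (G.degree v : ℝ))⁻¹ * (transP G) ^ ℓ) *ᵥ
          (Pi.single s 1 - Pi.single t 1)
        + (Pi.single s 1 - Pi.single t 1) ⬝ᵥ
          ((Matrix.diagonal fun v => (G.degree v : ℝ))⁻¹ * (transP G) ^ (ℓ + 1)) *ᵥ
          (Pi.single s 1 - Pi.single t 1) := by
  have h := (G.posSemidef_inv_degMatrix_mul_transP_pow_add hℓ).dotProduct_mulVec_nonneg
    (Pi.single s 1 - Pi.single t 1)
  rwa [star_trivial, add_mulVec, dotProduct_add] at h

/-- Two consecutive terms of the probabilistic expansion of effective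
resistance are jointly nonnegative: for even `ℓ`,
`(e_s−e_t)ᵀ D⁻¹Pℓ (e_s−e_t) + (e_s−e_t)ᵀ D⁻¹Pℓ⁺¹ (e_s−e_t) ≥ 0`. -/
theorem consecutive_terms_nonneg {V : Type*} [Fintype V] [DecidableEq V]
    (G : SimpleGraph V) [DecidableRel G.Adj]
    (hdeg : ∀ v : V, 0 < G.degree v) (s t : V) (ℓ : ℕ) (hℓ : Even ℓ) :
    0 ≤ (Pi.single s 1 - Pi.single t 1) ⬝ᵥ
          ((Matrix.diagonal fun v => (G.degree v : ℝ))⁻¹ * (transP G) ^ ℓ) *ᵥ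
          (Pi.single s 1 - Pi.single t 1)
        + (Pi.single s 1 - Pi.single t 1) ⬝ᵥ
          ((Matrix.diagonal fun v => (G.degree v : ℝ))⁻¹ * (transP G) ^ (ℓ + 1)) *ᵥ
          (Pi.single s 1 - Pi.single t 1) :=
  consecutive_terms_nonneg_general G s t ℓ hℓ
end

section
/- Under the conditions of the forward push invariant, the random variable T̂_i (defined via two independent L-step random walks from s and from t) satisfies |T̂_i| ≤ 2(L+1) − Σ_{ℓ=0}^{L} Σ_{v∈V} (q_s^(ℓ)(v) + q_t^(ℓ)(v)). -/
/-!
Each residue difference `(r_s⁽ᵏ⁾(v) − r_t⁽ᵏ⁾(v)) / d(v)` lies between `−r_t⁽ᵏ⁾(v)` and `r_s⁽ᵏ⁾(v)`.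
Since the walk indicators are 0/1, the step-`ℓ` term of `T̂ᵢ` is therefore bounded in absolute
value by the residue mass of both pushes up to level `L − ℓ`, which by the push invariant is
`2 − Σ_v (q_s⁽ᴸ⁻ˡ⁾(v) + q_t⁽ᴸ⁻ˡ⁾(v))`; summing over `ℓ` and reindexing `ℓ ↦ L − ℓ` gives the bound.
-/

open Finset

section IndicatorSums

variable {ι : Type*} (s : Finset ι) {X Y f g h : ι → ℝ}

lemma sum_mul_le_of_eq_zero_or_eq_one (hX : ∀ i ∈ s, X i = 0 ∨ X i = 1)
    (hfg : ∀ i ∈ s, f i ≤ g i) (hg : ∀ i ∈ s, 0 ≤ g i) :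
    ∑ i ∈ s, X i * f i ≤ ∑ i ∈ s, g i := by
  refine sum_le_sum fun i hi => ?_
  rcases hX i hi with h0 | h1
  · simpa [h0] using hg i hi
  · simpa [h1] using hfg i hi

lemma abs_sum_mul_add_sum_mul_neg_le (hX : ∀ i ∈ s, X i = 0 ∨ X i = 1)
    (hY : ∀ i ∈ s, Y i = 0 ∨ Y i = 1) (hfg : ∀ i ∈ s, f i ≤ g i)
    (hhf : ∀ i ∈ s, -h i ≤ f i) (hg : ∀ i ∈ s, 0 ≤ g i) (hh : ∀ i ∈ s, 0 ≤ h i) :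
    |∑ i ∈ s, X i * f i + ∑ i ∈ s, Y i * -f i| ≤ ∑ i ∈ s, g i + ∑ i ∈ s, h i := by
  have hnegf : ∀ i ∈ s, -f i ≤ h i := fun i hi => neg_le.mp (hhf i hi)
  have hXf := sum_mul_le_of_eq_zero_or_eq_one s hX hfg hg
  have hXnegf := sum_mul_le_of_eq_zero_or_eq_one s hX hnegf hh
  have hYf := sum_mul_le_of_eq_zero_or_eq_one s hY hfg hg
  have hYnegf := sum_mul_le_of_eq_zero_or_eq_one s hY hnegf hh
  simp only [mul_neg, sum_neg_distrib] at hXnegf hYnegf ⊢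
  rw [abs_le]
  constructor <;> linarith

end IndicatorSums

section Residues

variable {ι : Type*} (s : Finset ι) {R S : ι → ℝ} {d : ℝ}

lemma sum_sub_div_le_sum (hd : 0 ≤ d) (hS : ∀ k ∈ s, 0 ≤ S k)
    (hR : ∀ k ∈ s, R k / d ≤ R k) :
    ∑ k ∈ s, (R k - S k) / d ≤ ∑ k ∈ s, R k := by
  refine sum_le_sum fun k hk => ?_
  have : 0 ≤ S k / d := div_nonneg (hS k hk) hd
  rw [sub_div]
  linarith [hR k hk]

lemma neg_sum_le_sum_sub_div (hd : 0 ≤ d) (hR : ∀ k ∈ s, 0 ≤ R k)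
    (hS : ∀ k ∈ s, S k / d ≤ S k) :
    -∑ k ∈ s, S k ≤ ∑ k ∈ s, (R k - S k) / d := by
  have := sum_sub_div_le_sum s hd hR hS
  simp only [← neg_sub (R _), neg_div, sum_neg_distrib] at this
  linarith

end Residues

lemma sum_range_succ_sub_reflect (c : ℝ) (a : ℕ → ℝ) (L : ℕ) :
    ∑ ℓ ∈ range (L + 1), (c - a (L - ℓ)) = c * ((L : ℝ) + 1) - ∑ ℓ ∈ range (L + 1), a ℓ := by
  rw [sum_sub_distrib, sum_const, card_range, nsmul_eq_mul, mul_comm]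
  congr 1
  · push_cast; ring
  · simpa using sum_range_reflect a (L + 1)

theorem Ti_bounded_by_reserves_general {V : Type*} [Fintype V]
    (G : SimpleGraph V) [DecidableRel G.Adj]
    (L : ℕ)
    (qs qt rs rt : ℕ → V → ℝ)
    (hrs0 : ∀ k v, 0 ≤ rs k v) (hrt0 : ∀ k v, 0 ≤ rt k v)
    (hrs_div : ∀ k v, rs k v / (G.degree v : ℝ) ≤ rs k v)
    (hrt_div : ∀ k v, rt k v / (G.degree v : ℝ) ≤ rt k v)
    (hmass_s : ∀ ℓ ≤ L, ∑ v : V, ∑ k ∈ Finset.range (ℓ + 1), rs k v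
        = 1 - ∑ v : V, qs ℓ v)
    (hmass_t : ∀ ℓ ≤ L, ∑ v : V, ∑ k ∈ Finset.range (ℓ + 1), rt k v
        = 1 - ∑ v : V, qt ℓ v)
    (Xs Xt : ℕ → V → ℝ)
    (hXs01 : ∀ ℓ v, Xs ℓ v = 0 ∨ Xs ℓ v = 1)
    (hXt01 : ∀ ℓ v, Xt ℓ v = 0 ∨ Xt ℓ v = 1) :
    |∑ ℓ ∈ Finset.range (L + 1), ∑ v : V,
        Xs ℓ v * (∑ k ∈ Finset.range (L - ℓ + 1),
          (rs k v - rt k v) / (G.degree v : ℝ))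
      + ∑ ℓ ∈ Finset.range (L + 1), ∑ v : V,
        Xt ℓ v * (∑ k ∈ Finset.range (L - ℓ + 1),
          (rt k v - rs k v) / (G.degree v : ℝ))|
      ≤ 2 * ((L : ℝ) + 1)
        - ∑ ℓ ∈ Finset.range (L + 1), ∑ v : V, (qs ℓ v + qt ℓ v) := by
  have hflip : ∀ n v, ∑ k ∈ range n, (rt k v - rs k v) / (G.degree v : ℝ)
      = -∑ k ∈ range n, (rs k v - rt k v) / (G.degree v : ℝ) := by
    intro n v
    simp only [← neg_sub (rs _ v), neg_div, sum_neg_distrib]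
  have hterm : ∀ ℓ,
      |∑ v, Xs ℓ v * ∑ k ∈ range (L - ℓ + 1), (rs k v - rt k v) / (G.degree v : ℝ)
        + ∑ v, Xt ℓ v * ∑ k ∈ range (L - ℓ + 1), (rt k v - rs k v) / (G.degree v : ℝ)|
      ≤ 2 - ∑ v, (qs (L - ℓ) v + qt (L - ℓ) v) := by
    intro ℓ
    simp only [hflip]
    refine (abs_sum_mul_add_sum_mul_neg_le univ (fun v _ => hXs01 ℓ v) (fun v _ => hXt01 ℓ v)
      (fun v _ => sum_sub_div_le_sum _ (Nat.cast_nonneg _) (fun k _ => hrt0 k v)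
        (fun k _ => hrs_div k v))
      (fun v _ => neg_sum_le_sum_sub_div _ (Nat.cast_nonneg _) (fun k _ => hrs0 k v)
        (fun k _ => hrt_div k v))
      (fun v _ => sum_nonneg fun k _ => hrs0 k v)
      (fun v _ => sum_nonneg fun k _ => hrt0 k v)).trans_eq ?_
    rw [hmass_s _ (Nat.sub_le L ℓ), hmass_t _ (Nat.sub_le L ℓ), sum_add_distrib]
    ring
  calc _ ≤ ∑ ℓ ∈ range (L + 1), (2 - ∑ v, (qs (L - ℓ) v + qt (L - ℓ) v)) := by
        rw [← sum_add_distrib]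
        exact (abs_sum_le_sum_abs _ _).trans (sum_le_sum fun ℓ _ => hterm ℓ)
    _ = _ := sum_range_succ_sub_reflect 2 (fun ℓ => ∑ v, (qs ℓ v + qt ℓ v)) L

/-- Reserve-based bound on `T̂ᵢ`: under the total-mass identities
`Σ_v Σ_{k=0}^{ℓ} r⁽ᵏ⁾(v) = 1 − Σ_v q⁽ℓ⁾(v)` (for the pushes from both `s` and
`t`), the random variable `T̂ᵢ` satisfies
`|T̂ᵢ| ≤ 2(L+1) − Σ_{ℓ=0}^{L} Σ_v (q_s⁽ℓ⁾(v) + q_t⁽ℓ⁾(v))`. -/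
theorem Ti_bounded_by_reserves {V : Type*} [Fintype V] [DecidableEq V]
    (G : SimpleGraph V) [DecidableRel G.Adj]
    (hconn : G.Connected)
    (L : ℕ)
    (qs qt rs rt : ℕ → V → ℝ)
    (hqs0 : ∀ ℓ v, 0 ≤ qs ℓ v) (hqt0 : ∀ ℓ v, 0 ≤ qt ℓ v)
    (hrs0 : ∀ k v, 0 ≤ rs k v) (hrt0 : ∀ k v, 0 ≤ rt k v)
    (hrs_div : ∀ k v, rs k v / (G.degree v : ℝ) ≤ rs k v)
    (hrt_div : ∀ k v, rt k v / (G.degree v : ℝ) ≤ rt k v)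
    (hmass_s : ∀ ℓ ≤ L, ∑ v : V, ∑ k ∈ Finset.range (ℓ + 1), rs k v
        = 1 - ∑ v : V, qs ℓ v)
    (hmass_t : ∀ ℓ ≤ L, ∑ v : V, ∑ k ∈ Finset.range (ℓ + 1), rt k v
        = 1 - ∑ v : V, qt ℓ v)
    (Xs Xt : ℕ → V → ℝ)
    (hXs01 : ∀ ℓ v, Xs ℓ v = 0 ∨ Xs ℓ v = 1)
    (hXt01 : ∀ ℓ v, Xt ℓ v = 0 ∨ Xt ℓ v = 1)
    (hXs1 : ∀ ℓ, ∑ v : V, Xs ℓ v = 1)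
    (hXt1 : ∀ ℓ, ∑ v : V, Xt ℓ v = 1) :
    |∑ ℓ ∈ Finset.range (L + 1), ∑ v : V,
        Xs ℓ v * (∑ k ∈ Finset.range (L - ℓ + 1),
          (rs k v - rt k v) / (G.degree v : ℝ))
      + ∑ ℓ ∈ Finset.range (L + 1), ∑ v : V,
        Xt ℓ v * (∑ k ∈ Finset.range (L - ℓ + 1),
          (rt k v - rs k v) / (G.degree v : ℝ))|
      ≤ 2 * ((L : ℝ) + 1)
        - ∑ ℓ ∈ Finset.range (L + 1), ∑ v : V, (qs ℓ v + qt ℓ v) :=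
  Ti_bounded_by_reserves_general G L qs qt rs rt hrs0 hrt0 hrs_div hrt_div hmass_s hmass_t Xs Xt
    hXs01 hXt01
end

section
/- The BiSPER estimator is unbiased: E[R̂_L(s,t)] = R_L(s,t), where R̂_L(s,t) = Σ_{ℓ=0}^{L}(q_s^(ℓ)(s)/d(s) − q_s^(ℓ)(t)/d(t) + q_t^(ℓ)(t)/d(t) − q_t^(ℓ)(s)/d(s)) + T̂(s,t), T̂(s,t) is the empirical mean of N i.i.d. samples T̂_i(s,t), and each T̂_i is built from independent L-step random walks from s and t. -/
open Matrix Finset MeasureTheory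

/-!
Taking expectations replaces each walk indicator `X^(ℓ)(v)` by `p^(ℓ)(·, v)`, so `E[T̂ᵢ]` is a
combination of the sums `Σ_ℓ Σ_v p^(ℓ)(u, v) Σ_{k ≤ L - ℓ} r^(k)(v) / d(v)` (`residueWalkSum`).
Dividing the push invariant at `(x, u)` by `d(u)`, flipping `p^(k)(v, u) / d(u) = p^(k)(u, v) / d(v)`
and reindexing the triangle `k ≤ ℓ ≤ L` shows that `Σ_ℓ p^(ℓ)(x, u) / d(u)` is the reserve sum plus
exactly such a sum; the four instances `(x, u) ∈ {s, t}²` add up to `R_L(s, t)`.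
-/

theorem sum_range_sum_range_tsub {M : Type*} [AddCommMonoid M] (g : ℕ → ℕ → M) (L : ℕ) :
    ∑ ℓ ∈ range (L + 1), ∑ k ∈ range (ℓ + 1), g (ℓ - k) k
      = ∑ k ∈ range (L + 1), ∑ m ∈ range (L - k + 1), g m k := by
  refine (sum_range_diag_flip (L + 1) fun k j => g j k).trans (sum_congr rfl fun k hk => ?_)
  rw [Nat.sub_add_comm (Nat.lt_succ_iff.mp (mem_range.mp hk))]

section PushInvariant

variable {V : Type*} [Fintype V] (p : ℕ → V → V → ℝ) (d : V → ℝ) (L : ℕ)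

noncomputable def residueWalkSum (r : ℕ → V → ℝ) (u : V) : ℝ :=
  ∑ ℓ ∈ range (L + 1), ∑ v, p ℓ u v * ∑ k ∈ range (L - ℓ + 1), r k v / d v

theorem residueWalkSum_sub (r r' : ℕ → V → ℝ) (u : V) :
    residueWalkSum p d L (fun k v => r k v - r' k v) u
      = residueWalkSum p d L r u - residueWalkSum p d L r' u := by
  simp only [residueWalkSum, sub_div, sum_sub_distrib, mul_sub]

theorem sum_div_eq_reserve_add_residueWalkSum {q r : ℕ → V → ℝ} {x u : V}
    (hinv : ∀ ℓ, p ℓ x u = q ℓ u + ∑ k ∈ range (ℓ + 1), ∑ v, r (ℓ - k) v * p k v u)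
    (hsym : ∀ ℓ v, p ℓ v u / d u = p ℓ u v / d v) :
    ∑ ℓ ∈ range (L + 1), p ℓ x u / d u
      = ∑ ℓ ∈ range (L + 1), q ℓ u / d u + residueWalkSum p d L r u := by
  calc ∑ ℓ ∈ range (L + 1), p ℓ x u / d u
      = ∑ ℓ ∈ range (L + 1), (q ℓ u / d u
          + ∑ k ∈ range (ℓ + 1), ∑ v, r (ℓ - k) v * (p k u v / d v)) := by
        refine sum_congr rfl fun ℓ _ => ?_
        simp only [hinv, add_div, sum_div, mul_div_assoc, hsym]
    _ = ∑ ℓ ∈ range (L + 1), q ℓ u / d u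
          + ∑ k ∈ range (L + 1), ∑ m ∈ range (L - k + 1), ∑ v, r m v * (p k u v / d v) := by
        rw [sum_add_distrib, sum_range_sum_range_tsub (fun m k => ∑ v, r m v * (p k u v / d v))]
    _ = _ := by
        simp only [residueWalkSum, mul_sum]
        congr 1
        refine sum_congr rfl fun k _ => sum_comm.trans (sum_congr rfl fun v _ => ?_)
        exact sum_congr rfl fun m _ => by ring

end PushInvariant

section Expectation

variable {Ω : Type*} [MeasurableSpace Ω] {μ : Measure Ω}

theorem integrable_sum_sum_mul {ι κ : Type*} (s : Finset ι) (t : Finset κ)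
    {X : ι → κ → Ω → ℝ} (hX : ∀ i j, Integrable (X i j) μ) (c : ι → κ → ℝ) :
    Integrable (fun ω => ∑ i ∈ s, ∑ j ∈ t, X i j ω * c i j) μ :=
  integrable_finsetSum _ fun i _ => integrable_finsetSum _ fun j _ => (hX i j).mul_const _

theorem integral_sum_sum_mul {ι κ : Type*} (s : Finset ι) (t : Finset κ)
    {X : ι → κ → Ω → ℝ} (hX : ∀ i j, Integrable (X i j) μ) (c : ι → κ → ℝ) :
    ∫ ω, ∑ i ∈ s, ∑ j ∈ t, X i j ω * c i j ∂μ = ∑ i ∈ s, ∑ j ∈ t, (∫ ω, X i j ω ∂μ) * c i j := by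
  rw [integral_finsetSum _ fun i _ => integrable_finsetSum _ fun j _ => (hX i j).mul_const _]
  refine sum_congr rfl fun i _ => ?_
  rw [integral_finsetSum _ fun j _ => (hX i j).mul_const _]
  simp only [integral_mul_const]

theorem integral_const_add_mean [IsProbabilityMeasure μ] {N : ℕ} (hN : 0 < N) (a m : ℝ)
    {Y : Fin N → Ω → ℝ} (hY : ∀ i, Integrable (Y i) μ) (hm : ∀ i, ∫ ω, Y i ω ∂μ = m) :
    ∫ ω, a + (1 / (N : ℝ)) * ∑ i, Y i ω ∂μ = a + m := by
  rw [integral_add (integrable_const a) ((integrable_finsetSum _ fun i _ => hY i).const_mul _),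
    integral_const, integral_const_mul, integral_finsetSum _ fun i _ => hY i]
  simp only [hm, probReal_univ, one_smul, sum_const, card_univ, Fintype.card_fin, nsmul_eq_mul]
  field_simp

end Expectation

theorem bisper_unbiased_general {V : Type*} [Fintype V] [DecidableEq V]
    (G : SimpleGraph V) [DecidableRel G.Adj]
    {Ω : Type*} [MeasurableSpace Ω] (μ : Measure Ω) [IsProbabilityMeasure μ]
    (s t : V) (L N : ℕ) (hN : 0 < N)
    (qs qt rs rt : ℕ → V → ℝ)
    (Xs Xt : Fin N → ℕ → V → Ω → ℝ)
    (hint_s : ∀ i ℓ v, Integrable (Xs i ℓ v) μ)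
    (hint_t : ∀ i ℓ v, Integrable (Xt i ℓ v) μ)
    (hEs : ∀ i ℓ v, ∫ ω, Xs i ℓ v ω ∂μ = stepProb G ℓ s v)
    (hEt : ∀ i ℓ v, ∫ ω, Xt i ℓ v ω ∂μ = stepProb G ℓ t v)
    (hinv_s : ∀ ℓ u, stepProb G ℓ s u
        = qs ℓ u + ∑ k ∈ Finset.range (ℓ + 1), ∑ v : V,
            rs (ℓ - k) v * stepProb G k v u)
    (hinv_t : ∀ ℓ u, stepProb G ℓ t u
        = qt ℓ u + ∑ k ∈ Finset.range (ℓ + 1), ∑ v : V,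
            rt (ℓ - k) v * stepProb G k v u)
    (hsym : ∀ ℓ (u v : V), stepProb G ℓ v u / (G.degree u : ℝ)
        = stepProb G ℓ u v / (G.degree v : ℝ)) :
    ∫ ω,
        (∑ ℓ ∈ Finset.range (L + 1),
            (qs ℓ s / (G.degree s : ℝ) - qs ℓ t / (G.degree t : ℝ)
              + qt ℓ t / (G.degree t : ℝ) - qt ℓ s / (G.degree s : ℝ))
          + (1 / (N : ℝ)) * ∑ i : Fin N,
              (∑ ℓ ∈ Finset.range (L + 1), ∑ v : V,
                  Xs i ℓ v ω * (∑ k ∈ Finset.range (L - ℓ + 1),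
                    (rs k v - rt k v) / (G.degree v : ℝ))
                + ∑ ℓ ∈ Finset.range (L + 1), ∑ v : V,
                  Xt i ℓ v ω * (∑ k ∈ Finset.range (L - ℓ + 1),
                    (rt k v - rs k v) / (G.degree v : ℝ)))) ∂μ
      = ∑ ℓ ∈ Finset.range (L + 1),
          (stepProb G ℓ s s / (G.degree s : ℝ) - stepProb G ℓ s t / (G.degree t : ℝ)
            - stepProb G ℓ t s / (G.degree s : ℝ)
            + stepProb G ℓ t t / (G.degree t : ℝ)) := by
  have hT : ∀ i, ∫ ω,
      (∑ ℓ ∈ range (L + 1), ∑ v, Xs i ℓ v ω * ∑ k ∈ range (L - ℓ + 1),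
          (rs k v - rt k v) / (G.degree v : ℝ)
        + ∑ ℓ ∈ range (L + 1), ∑ v, Xt i ℓ v ω * ∑ k ∈ range (L - ℓ + 1),
          (rt k v - rs k v) / (G.degree v : ℝ)) ∂μ
      = residueWalkSum (stepProb G) (fun v => (G.degree v : ℝ)) L
            (fun k v => rs k v - rt k v) s
        + residueWalkSum (stepProb G) (fun v => (G.degree v : ℝ)) L
            (fun k v => rt k v - rs k v) t := by
    intro i
    rw [integral_add (integrable_sum_sum_mul _ _ (hint_s i) _)
        (integrable_sum_sum_mul _ _ (hint_t i) _),
      integral_sum_sum_mul _ _ (hint_s i), integral_sum_sum_mul _ _ (hint_t i)]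
    simp only [hEs, hEt, residueWalkSum]
  refine (integral_const_add_mean hN _ _ (fun i => ?_) hT).trans ?_
  · exact (integrable_sum_sum_mul _ _ (hint_s i) _).add (integrable_sum_sum_mul _ _ (hint_t i) _)
  have key :=
    @sum_div_eq_reserve_add_residueWalkSum _ _ (stepProb G) (fun v => (G.degree v : ℝ)) L
  have hss := key (hinv_s · s) (hsym · s)
  have hst := key (hinv_s · t) (hsym · t)
  have hts := key (hinv_t · s) (hsym · s)
  have htt := key (hinv_t · t) (hsym · t)
  simp only [residueWalkSum_sub, sum_add_distrib, sum_sub_distrib]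
  linarith

/-- Unbiasedness of the BiSPER estimator: `E[R̂_L(s,t)] = R_L(s,t)`, where
`R̂_L(s,t)` consists of the deterministic reserve part plus the empirical mean
of `N` samples `T̂ᵢ(s,t)` built from independent `L`-step random walks from
`s` and `t` (modeled by indicator random variables `Xs i ℓ v`, `Xt i ℓ v` with
`E[Xs i ℓ v] = p⁽ℓ⁾(s,v)` and `E[Xt i ℓ v] = p⁽ℓ⁾(t,v)`). -/
theorem bisper_unbiased {V : Type*} [Fintype V] [DecidableEq V]
    (G : SimpleGraph V) [DecidableRel G.Adj]
    (hconn : G.Connected) (hdeg : ∀ v : V, 0 < G.degree v)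
    {Ω : Type*} [MeasurableSpace Ω] (μ : Measure Ω) [IsProbabilityMeasure μ]
    (s t : V) (L N : ℕ) (hN : 0 < N)
    (qs qt rs rt : ℕ → V → ℝ)
    (Xs Xt : Fin N → ℕ → V → Ω → ℝ)
    (hint_s : ∀ i ℓ v, Integrable (Xs i ℓ v) μ)
    (hint_t : ∀ i ℓ v, Integrable (Xt i ℓ v) μ)
    (hEs : ∀ i ℓ v, ∫ ω, Xs i ℓ v ω ∂μ = stepProb G ℓ s v)
    (hEt : ∀ i ℓ v, ∫ ω, Xt i ℓ v ω ∂μ = stepProb G ℓ t v)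
    (hinv_s : ∀ ℓ u, stepProb G ℓ s u
        = qs ℓ u + ∑ k ∈ Finset.range (ℓ + 1), ∑ v : V,
            rs (ℓ - k) v * stepProb G k v u)
    (hinv_t : ∀ ℓ u, stepProb G ℓ t u
        = qt ℓ u + ∑ k ∈ Finset.range (ℓ + 1), ∑ v : V,
            rt (ℓ - k) v * stepProb G k v u)
    (hsym : ∀ ℓ (u v : V), stepProb G ℓ v u / (G.degree u : ℝ)
        = stepProb G ℓ u v / (G.degree v : ℝ)) :
    ∫ ω,
        (∑ ℓ ∈ Finset.range (L + 1),
            (qs ℓ s / (G.degree s : ℝ) - qs ℓ t / (G.degree t : ℝ)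
              + qt ℓ t / (G.degree t : ℝ) - qt ℓ s / (G.degree s : ℝ))
          + (1 / (N : ℝ)) * ∑ i : Fin N,
              (∑ ℓ ∈ Finset.range (L + 1), ∑ v : V,
                  Xs i ℓ v ω * (∑ k ∈ Finset.range (L - ℓ + 1),
                    (rs k v - rt k v) / (G.degree v : ℝ))
                + ∑ ℓ ∈ Finset.range (L + 1), ∑ v : V,
                  Xt i ℓ v ω * (∑ k ∈ Finset.range (L - ℓ + 1),
                    (rt k v - rs k v) / (G.degree v : ℝ)))) ∂μ
      = ∑ ℓ ∈ Finset.range (L + 1),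
          (stepProb G ℓ s s / (G.degree s : ℝ) - stepProb G ℓ s t / (G.degree t : ℝ)
            - stepProb G ℓ t s / (G.degree s : ℝ)
            + stepProb G ℓ t t / (G.degree t : ℝ)) :=
  bisper_unbiased_general G μ s t L N hN qs qt rs rt Xs Xt hint_s hint_t hEs hEt hinv_s hinv_t hsym
end

section
/- In a connected non-bipartite undirected graph, the effective resistance admits the spectral bound R(s,t) ≤ (1/d(s) + 1/d(t))·(1/(1−λ))·2, where λ = max{λ_2, |λ_n|} < 1 is the second-largest eigenvalue modulus of the transition matrix P restricted away from the top eigenvector. -/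
/-!
With `D` the degree matrix, `P = A D⁻¹` is similar to the symmetric matrix
`S = D^{-1/2} A D^{-1/2}`, and the `ℓ`-th term of the series is `yᵀ S^ℓ y` with
`y = D^{-1/2} (e_s - e_t)`. Expand `y` in an orthonormal eigenbasis of `S`. An eigenvector of
eigenvalue `1` is `D^{1/2} f` with `L f = 0` for the Laplacian `L = D - A`, so `f` is constant on
the connected graph and the eigenvector is orthogonal to `y`. Every other eigenvalue has modulus at
most `λ`, so the `ℓ`-th term is at most `λ^ℓ ‖y‖² = λ^ℓ (1/d(s) + 1/d(t))`, and the geometric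
series sums to the bound.
-/

open Matrix Finset

namespace Matrix.IsHermitian

variable {n : Type*} [Fintype n] [DecidableEq n] {S : Matrix n n ℝ} (hS : S.IsHermitian)

theorem pow_mulVec_eigenvectorBasis (i : n) (ℓ : ℕ) :
    S ^ ℓ *ᵥ ⇑(hS.eigenvectorBasis i) = hS.eigenvalues i ^ ℓ • ⇑(hS.eigenvectorBasis i) := by
  induction ℓ with
  | zero => simp
  | succ ℓ ih =>
    rw [pow_succ, ← mulVec_mulVec, hS.mulVec_eigenvectorBasis, mulVec_smul, ih, smul_smul,
      ← pow_succ']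

theorem dotProduct_pow_mulVec_eq_sum (y : n → ℝ) (ℓ : ℕ) :
    y ⬝ᵥ S ^ ℓ *ᵥ y = ∑ i, hS.eigenvalues i ^ ℓ * (⇑(hS.eigenvectorBasis i) ⬝ᵥ y) ^ 2 := by
  set b := hS.eigenvectorBasis
  have parseval : ∀ x z : n → ℝ, ∑ i, (⇑(b i) ⬝ᵥ x) * (⇑(b i) ⬝ᵥ z) = x ⬝ᵥ z := fun x z => by
    have := b.sum_inner_mul_inner (WithLp.toLp 2 x) (WithLp.toLp 2 z)
    simp only [EuclideanSpace.inner_eq_star_dotProduct, star_trivial] at this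
    simpa only [dotProduct_comm] using this
  have hb : ∀ i, ⇑(b i) ⬝ᵥ S ^ ℓ *ᵥ y = hS.eigenvalues i ^ ℓ * (⇑(b i) ⬝ᵥ y) := fun i => by
    have hT : (S ^ ℓ)ᵀ = S ^ ℓ := by
      rw [← conjTranspose_eq_transpose_of_trivial]; exact (hS.pow ℓ).eq
    rw [← hT, dotProduct_transpose_mulVec, hS.pow_mulVec_eigenvectorBasis, dotProduct_smul,
      smul_eq_mul, dotProduct_comm]
  rw [← parseval]
  refine Finset.sum_congr rfl fun i _ => ?_
  rw [hb]
  ring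

theorem abs_dotProduct_pow_mulVec_le (y : n → ℝ) {r : ℝ}
    (h : ∀ i, |hS.eigenvalues i| ≤ r ∨ ⇑(hS.eigenvectorBasis i) ⬝ᵥ y = 0) (ℓ : ℕ) :
    |y ⬝ᵥ S ^ ℓ *ᵥ y| ≤ r ^ ℓ * (y ⬝ᵥ y) := by
  have hyy := hS.dotProduct_pow_mulVec_eq_sum y 0
  simp only [pow_zero, one_mulVec, one_mul] at hyy
  rw [hS.dotProduct_pow_mulVec_eq_sum, hyy, Finset.mul_sum]
  refine (Finset.abs_sum_le_sum_abs _ _).trans (Finset.sum_le_sum fun i _ => ?_)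
  rcases h i with hi | hi
  · rw [abs_mul, abs_pow, abs_sq]
    gcongr
  · simp [hi]

end Matrix.IsHermitian

theorem Matrix.single_sub_single_dotProduct_diagonal_mulVec {n R : Type*} [Fintype n]
    [DecidableEq n] [CommRing R] {s t : n} (hst : s ≠ t) (u : n → R) :
    (Pi.single s 1 - Pi.single t 1) ⬝ᵥ diagonal u *ᵥ (Pi.single s 1 - Pi.single t 1) =
      u s + u t := by
  simp [mulVec_sub, hst, hst.symm]

theorem tsum_le_of_abs_le_geometric {f : ℕ → ℝ} {r C : ℝ} (hr₀ : 0 ≤ r) (hr₁ : r < 1)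
    (hf : ∀ n, |f n| ≤ r ^ n * C) : ∑' n, f n ≤ C / (1 - r) := by
  have hg : Summable fun n => r ^ n * C := (summable_geometric_of_lt_one hr₀ hr₁).mul_right C
  calc ∑' n, f n ≤ ∑' n, r ^ n * C :=
        Summable.tsum_le_tsum (fun n => (le_abs_self _).trans (hf n))
          (hg.of_norm_bounded hf) hg
    _ = C / (1 - r) := by rw [tsum_mul_right, tsum_geometric_of_lt_one hr₀ hr₁, inv_mul_eq_div]

namespace SimpleGraph

variable {V : Type*} [Fintype V] [DecidableEq V] (G : SimpleGraph V) [DecidableRel G.Adj]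

noncomputable def sqrtDegMatrix : Matrix V V ℝ := diagonal fun v => √(G.degree v)

noncomputable def normalizedAdjMatrix : Matrix V V ℝ :=
  G.sqrtDegMatrix⁻¹ * G.adjMatrix ℝ * G.sqrtDegMatrix⁻¹

theorem sqrtDegMatrix_mul_self : G.sqrtDegMatrix * G.sqrtDegMatrix = G.degMatrix ℝ := by
  simp only [sqrtDegMatrix, degMatrix, diagonal_mul_diagonal,
    Real.mul_self_sqrt (Nat.cast_nonneg _)]

theorem isUnit_det_sqrtDegMatrix (hdeg : ∀ v, 0 < G.degree v) : IsUnit G.sqrtDegMatrix.det :=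
  (isUnit_iff_isUnit_det _).mp <| isUnit_diagonal.mpr <| Pi.isUnit_iff.mpr fun v =>
    (Real.sqrt_pos.mpr (Nat.cast_pos.mpr (hdeg v))).ne'.isUnit

theorem transpose_inv_sqrtDegMatrix : G.sqrtDegMatrix⁻¹ᵀ = G.sqrtDegMatrix⁻¹ := by
  rw [transpose_nonsing_inv, sqrtDegMatrix, diagonal_transpose]

theorem isHermitian_normalizedAdjMatrix : G.normalizedAdjMatrix.IsHermitian := by
  simpa only [normalizedAdjMatrix, conjTranspose_eq_transpose_of_trivial,
    transpose_inv_sqrtDegMatrix] using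
    isHermitian_conjTranspose_mul_mul G.sqrtDegMatrix⁻¹ (G.isHermitian_adjMatrix ℝ)

theorem transP_eq_conj (hdeg : ∀ v, 0 < G.degree v) :
    transP G = G.sqrtDegMatrix * G.normalizedAdjMatrix * G.sqrtDegMatrix⁻¹ := by
  rw [transP, normalizedAdjMatrix, ← degMatrix, ← sqrtDegMatrix_mul_self, Matrix.mul_inv_rev]
  simp only [← mul_assoc, mul_nonsing_inv _ (G.isUnit_det_sqrtDegMatrix hdeg), one_mul]

theorem inv_degMatrix (hdeg : ∀ v, 0 < G.degree v) :
    (G.degMatrix ℝ)⁻¹ = diagonal fun v => (G.degree v : ℝ)⁻¹ :=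
  inv_eq_left_inv <| by
    rw [degMatrix, diagonal_mul_diagonal, ← diagonal_one]
    exact congrArg diagonal <| funext fun v => inv_mul_cancel₀ (Nat.cast_pos.mpr (hdeg v)).ne'

theorem transP_pow_eq_conj_s18 (hdeg : ∀ v, 0 < G.degree v) (ℓ : ℕ) :
    transP G ^ ℓ = G.sqrtDegMatrix * G.normalizedAdjMatrix ^ ℓ * G.sqrtDegMatrix⁻¹ := by
  rw [transP_eq_conj G hdeg]
  exact Units.conj_pow (nonsingInvUnit _ (G.isUnit_det_sqrtDegMatrix hdeg)) _ ℓ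

theorem spectrum_transP (hdeg : ∀ v, 0 < G.degree v) :
    spectrum ℝ (transP G) = spectrum ℝ G.normalizedAdjMatrix := by
  rw [transP_eq_conj G hdeg]
  exact spectrum.units_conjugate (u := nonsingInvUnit _ (G.isUnit_det_sqrtDegMatrix hdeg))

theorem degMatrix_inv_mul_transP_pow (hdeg : ∀ v, 0 < G.degree v) (ℓ : ℕ) :
    (G.degMatrix ℝ)⁻¹ * transP G ^ ℓ =
      G.sqrtDegMatrix⁻¹ * G.normalizedAdjMatrix ^ ℓ * G.sqrtDegMatrix⁻¹ := by
  rw [transP_pow_eq_conj_s18 G hdeg, ← sqrtDegMatrix_mul_self, Matrix.mul_inv_rev]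
  simp only [mul_assoc, nonsing_inv_mul_cancel_left _ _ (G.isUnit_det_sqrtDegMatrix hdeg)]

theorem dotProduct_inv_sqrtDegMatrix_mulVec (v w : V → ℝ) :
    v ⬝ᵥ G.sqrtDegMatrix⁻¹ *ᵥ w = (G.sqrtDegMatrix⁻¹ *ᵥ v) ⬝ᵥ w := by
  rw [dotProduct_mulVec, ← mulVec_transpose, transpose_inv_sqrtDegMatrix]

theorem lapMatrix_mulVec_eq_zero_of_normalizedAdjMatrix_mulVec_eq_self
    (hdeg : ∀ v, 0 < G.degree v) {w : V → ℝ} (hw : G.normalizedAdjMatrix *ᵥ w = w) :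
    G.lapMatrix ℝ *ᵥ (G.sqrtDegMatrix⁻¹ *ᵥ w) = 0 := by
  rw [lapMatrix, sub_mulVec, sub_eq_zero, ← sqrtDegMatrix_mul_self]
  have hD := mul_nonsing_inv _ (G.isUnit_det_sqrtDegMatrix hdeg)
  calc (G.sqrtDegMatrix * G.sqrtDegMatrix) *ᵥ G.sqrtDegMatrix⁻¹ *ᵥ w
      = G.sqrtDegMatrix *ᵥ G.normalizedAdjMatrix *ᵥ w := by
        rw [hw, mulVec_mulVec, mul_assoc, hD, mul_one]
    _ = G.adjMatrix ℝ *ᵥ G.sqrtDegMatrix⁻¹ *ᵥ w := by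
        simp only [normalizedAdjMatrix, mulVec_mulVec, ← mul_assoc, hD, one_mul]

theorem dotProduct_inv_sqrtDegMatrix_mulVec_single_sub_single_eq_zero (hconn : G.Connected)
    (hdeg : ∀ v, 0 < G.degree v) {w : V → ℝ} (hw : G.normalizedAdjMatrix *ᵥ w = w) (s t : V) :
    w ⬝ᵥ G.sqrtDegMatrix⁻¹ *ᵥ (Pi.single s 1 - Pi.single t 1) = 0 := by
  have hconst := (G.lapMatrix_mulVec_eq_zero_iff_forall_reachable.mp
    (G.lapMatrix_mulVec_eq_zero_of_normalizedAdjMatrix_mulVec_eq_self hdeg hw)) s t (hconn s t)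
  rw [dotProduct_inv_sqrtDegMatrix_mulVec, dotProduct_comm, sub_dotProduct,
    single_one_dotProduct, single_one_dotProduct, hconst, sub_self]

end SimpleGraph

theorem effectiveResistance_spectral_bound_general {V : Type*} [Fintype V] [DecidableEq V]
    (G : SimpleGraph V) [DecidableRel G.Adj]
    (hconn : G.Connected)
    (lam : ℝ) (hlam0 : 0 ≤ lam) (hlam1 : lam < 1)
    (hspec : ∀ μ ∈ spectrum ℝ (transP G), μ = 1 ∨ |μ| ≤ lam)
    (s t : V) :
    (∑' ℓ : ℕ,
        (Pi.single s 1 - Pi.single t 1) ⬝ᵥ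
          ((Matrix.diagonal fun v => (G.degree v : ℝ))⁻¹ * (transP G) ^ ℓ) *ᵥ
          (Pi.single s 1 - Pi.single t 1))
      ≤ (1 / (G.degree s : ℝ) + 1 / (G.degree t : ℝ)) * (1 / (1 - lam)) * 2 := by
  have hlam : 0 < 1 - lam := by linarith
  rcases eq_or_ne s t with rfl | hst
  · simp only [sub_self, zero_dotProduct, tsum_zero]
    positivity
  have hdeg : ∀ v, 0 < G.degree v :=
    have := nontrivial_of_ne s t hst
    fun v => hconn.preconnected.degree_pos_of_nontrivial v
  set x : V → ℝ := Pi.single s 1 - Pi.single t 1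
  set y := G.sqrtDegMatrix⁻¹ *ᵥ x
  have hS := G.isHermitian_normalizedAdjMatrix
  have hterm : ∀ ℓ, x ⬝ᵥ ((diagonal fun v => (G.degree v : ℝ))⁻¹ * transP G ^ ℓ) *ᵥ x =
      y ⬝ᵥ G.normalizedAdjMatrix ^ ℓ *ᵥ y := fun ℓ => by
    rw [← SimpleGraph.degMatrix, G.degMatrix_inv_mul_transP_pow hdeg, ← mulVec_mulVec,
      ← mulVec_mulVec, G.dotProduct_inv_sqrtDegMatrix_mulVec]
  have hyy : y ⬝ᵥ y = 1 / (G.degree s : ℝ) + 1 / (G.degree t : ℝ) := by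
    have := hterm 0
    rw [pow_zero, mul_one, ← SimpleGraph.degMatrix, G.inv_degMatrix hdeg,
      single_sub_single_dotProduct_diagonal_mulVec hst, pow_zero, one_mulVec] at this
    rw [← this, one_div, one_div]
  have hcond : ∀ i, |hS.eigenvalues i| ≤ lam ∨ ⇑(hS.eigenvectorBasis i) ⬝ᵥ y = 0 := fun i => by
    rcases hspec _ (G.spectrum_transP hdeg ▸ hS.eigenvalues_mem_spectrum_real i) with h1 | h
    · exact .inr <| G.dotProduct_inv_sqrtDegMatrix_mulVec_single_sub_single_eq_zero hconn hdeg
        (by rw [hS.mulVec_eigenvectorBasis, h1, one_smul]) s t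
    · exact .inl h
  calc _ ≤ (1 / (G.degree s : ℝ) + 1 / (G.degree t : ℝ)) / (1 - lam) :=
        tsum_le_of_abs_le_geometric hlam0 hlam1 fun ℓ =>
          hterm ℓ ▸ hyy ▸ hS.abs_dotProduct_pow_mulVec_le y hcond ℓ
    _ ≤ _ := by
        rw [div_eq_mul_one_div]
        exact le_mul_of_one_le_right (by positivity) one_le_two

/-- Spectral bound on effective resistance: in a connected non-bipartite graph
whose non-top eigenvalues of `P` are bounded in modulus by `λ < 1`,
`R(s,t) = Σ_ℓ (e_s−e_t)ᵀ D⁻¹Pℓ (e_s−e_t) ≤ (1/d(s)+1/d(t))·(1/(1−λ))·2`. -/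
theorem effectiveResistance_spectral_bound {V : Type*} [Fintype V] [DecidableEq V]
    (G : SimpleGraph V) [DecidableRel G.Adj]
    (hconn : G.Connected) (hnb : ¬ G.Colorable 2)
    (lam : ℝ) (hlam0 : 0 ≤ lam) (hlam1 : lam < 1)
    (hspec : ∀ μ ∈ spectrum ℝ (transP G), μ = 1 ∨ |μ| ≤ lam)
    (s t : V) :
    (∑' ℓ : ℕ,
        (Pi.single s 1 - Pi.single t 1) ⬝ᵥ
          ((Matrix.diagonal fun v => (G.degree v : ℝ))⁻¹ * (transP G) ^ ℓ) *ᵥ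
          (Pi.single s 1 - Pi.single t 1))
      ≤ (1 / (G.degree s : ℝ) + 1 / (G.degree t : ℝ)) * (1 / (1 - lam)) * 2 :=
  effectiveResistance_spectral_bound_general G hconn lam hlam0 hlam1 hspec s t
end
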